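/- For c₀ > 0 and ω₀ ∈ (−π/2, π/2), the principal-value integral J(c₀ e^{iω₀}) := (1/(2π)) ∫_{−∞}^{+∞} (e^{−c₀|ξ| e^{iω₀ sign ξ}} − e^{−|ξ|})/(−iξ) dξ equals ω₀/π. -/

import Mathlib

/-!
For `0 < re w`, the complex Frullani integral `∫₀^∞ (e^{-ξ} - e^{-wξ}) / ξ dξ` equals `log w`:
along the segment `z t = 1 + t (w - 1)`, which stays in the right half-plane, the integrand is
`∫₀¹ (w - 1) e^{-z t ξ} dt`, and swapping the integrals leaves `∫₀¹ (w - 1) / z t dt = log w`.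
On `ξ > 0` the integrand of `J` is `-i` times this kernel with `w = c₀ e^{iω₀}`, and on `ξ < 0`
it is `i` times the kernel with `w̄`, so `2π J = i (log w̄ - log w) = 2 arg w = 2 ω₀`.
-/

open Complex Set MeasureTheory

theorem hasDerivAt_cexp_neg_segment_mul (w : ℂ) (ξ t : ℝ) :
    HasDerivAt (fun t : ℝ => cexp (-((1 + t * (w - 1)) * ξ)))
      (-((w - 1) * cexp (-((1 + t * (w - 1)) * ξ)) * ξ)) t := by
  have h : HasDerivAt (fun t : ℝ => -((1 + t * (w - 1)) * ξ)) (-((w - 1) * ξ)) t := by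
    simpa using ((((hasDerivAt_id (t : ℂ)).comp_ofReal).mul_const (w - 1)).const_add 1
      |>.mul_const (ξ : ℂ)).fun_neg
  convert h.cexp using 1
  ring

theorem cexp_neg_sub_cexp_neg_mul_div_eq_integral (w : ℂ) {ξ : ℝ} (hξ : ξ ≠ 0) :
    (cexp (-ξ) - cexp (-(w * ξ))) / ξ =
      ∫ t in Ioc (0 : ℝ) 1, (w - 1) * cexp (-((1 + t * (w - 1)) * ξ)) := by
  have hftc := intervalIntegral.integral_eq_sub_of_hasDerivAt
    (fun t _ => hasDerivAt_cexp_neg_segment_mul w ξ t)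
    ((by fun_prop : Continuous fun t : ℝ =>
      -((w - 1) * cexp (-((1 + t * (w - 1)) * ξ)) * ξ)).intervalIntegrable 0 1)
  rw [intervalIntegral.integral_neg, intervalIntegral.integral_mul_const,
    intervalIntegral.integral_of_le zero_le_one] at hftc
  simp only [ofReal_zero, zero_mul, add_zero, ofReal_one, one_mul, add_sub_cancel] at hftc
  rw [div_eq_iff (ofReal_ne_zero.2 hξ)]
  linear_combination hftc

section ComplexFrullani

variable {w : ℂ}

theorem min_one_re_le_re_segment {t : ℝ} (ht : t ∈ Icc (0 : ℝ) 1) :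
    min 1 w.re ≤ (1 + t * (w - 1)).re := by
  have h₁ := min_le_left 1 w.re
  have h₂ := min_le_right 1 w.re
  simp only [add_re, one_re, mul_re, ofReal_re, sub_re, ofReal_im, sub_im, one_im, zero_mul,
    sub_zero]
  nlinarith [ht.1, ht.2]

theorem norm_cexp_neg_segment_mul_le {t ξ : ℝ} (ht : t ∈ Icc (0 : ℝ) 1) (hξ : 0 ≤ ξ) :
    ‖cexp (-((1 + t * (w - 1)) * ξ))‖ ≤ Real.exp (-(min 1 w.re * ξ)) := by
  rw [norm_exp, Real.exp_le_exp, neg_re, re_mul_ofReal, neg_le_neg_iff]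
  exact mul_le_mul_of_nonneg_right (min_one_re_le_re_segment ht) hξ

theorem integrable_cexp_neg_segment_mul (hw : 0 < w.re) :
    Integrable (Function.uncurry fun (ξ t : ℝ) => (w - 1) * cexp (-((1 + t * (w - 1)) * ξ)))
      ((volume.restrict (Ioi 0)).prod (volume.restrict (Ioc 0 1))) := by
  have hbound : Integrable (fun p : ℝ × ℝ => ‖w - 1‖ * Real.exp (-(min 1 w.re * p.1)) * 1)
      ((volume.restrict (Ioi 0)).prod (volume.restrict (Ioc 0 1))) := by
    have hexp : Integrable (fun ξ : ℝ => ‖w - 1‖ * Real.exp (-(min 1 w.re * ξ)))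
        (volume.restrict (Ioi 0)) := by
      simpa only [neg_mul] using (exp_neg_integrableOn_Ioi 0 (lt_min one_pos hw)).const_mul _
    exact hexp.mul_prod (integrable_const 1)
  refine hbound.mono' (by fun_prop) ?_
  rw [Measure.prod_restrict]
  filter_upwards [ae_restrict_mem (measurableSet_Ioi.prod measurableSet_Ioc)] with p hp
  rw [Function.uncurry_apply_pair, norm_mul, mul_one]
  exact mul_le_mul_of_nonneg_left
    (norm_cexp_neg_segment_mul_le (Ioc_subset_Icc_self hp.2) (le_of_lt hp.1)) (norm_nonneg _)

theorem integral_Ioi_cexp_neg_mul {z : ℂ} (hz : 0 < z.re) :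
    ∫ ξ in Ioi (0 : ℝ), cexp (-(z * ξ)) = z⁻¹ := by
  have h := integral_exp_mul_complex_Ioi (a := -z) (by simpa using hz) 0
  simp only [neg_mul] at h
  simp [h]

theorem integral_sub_one_div_segment (hw : 0 < w.re) :
    ∫ t in Ioc (0 : ℝ) 1, (w - 1) / (1 + t * (w - 1)) = log w := by
  have hre : ∀ t ∈ uIcc (0 : ℝ) 1, 0 < (1 + t * (w - 1)).re := fun t ht =>
    (lt_min one_pos hw).trans_le
      (min_one_re_le_re_segment (by rwa [uIcc_of_le zero_le_one] at ht))
  have hderiv : ∀ t ∈ uIcc (0 : ℝ) 1,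
      HasDerivAt (fun t : ℝ => log (1 + t * (w - 1))) ((w - 1) / (1 + t * (w - 1))) t := by
    intro t ht
    refine HasDerivAt.clog_real ?_ (mem_slitPlane_iff.2 (Or.inl (hre t ht)))
    simpa using (((hasDerivAt_id (t : ℂ)).comp_ofReal).mul_const (w - 1)).const_add 1
  have hcont : ContinuousOn (fun t : ℝ => (w - 1) / (1 + t * (w - 1))) (uIcc 0 1) :=
    ContinuousOn.div (by fun_prop) (by fun_prop) fun t ht h => by simpa [h] using hre t ht
  rw [← intervalIntegral.integral_of_le zero_le_one,
    intervalIntegral.integral_eq_sub_of_hasDerivAt hderiv hcont.intervalIntegrable]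
  simp

theorem integrableOn_cexp_neg_sub_cexp_neg_mul_div (hw : 0 < w.re) :
    IntegrableOn (fun ξ : ℝ => (cexp (-ξ) - cexp (-(w * ξ))) / ξ) (Ioi 0) := by
  refine (integrable_cexp_neg_segment_mul hw).integral_prod_left.congr ?_
  filter_upwards [ae_restrict_mem measurableSet_Ioi] with ξ hξ
  exact (cexp_neg_sub_cexp_neg_mul_div_eq_integral w (ne_of_gt hξ)).symm

theorem integral_Ioi_cexp_neg_sub_cexp_neg_mul_div (hw : 0 < w.re) :
    ∫ ξ in Ioi (0 : ℝ), (cexp (-ξ) - cexp (-(w * ξ))) / ξ = log w := calc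
  _ = ∫ ξ in Ioi (0 : ℝ), ∫ t in Ioc (0 : ℝ) 1, (w - 1) * cexp (-((1 + t * (w - 1)) * ξ)) :=
      setIntegral_congr_fun measurableSet_Ioi fun ξ hξ =>
        cexp_neg_sub_cexp_neg_mul_div_eq_integral w (ne_of_gt hξ)
  _ = ∫ t in Ioc (0 : ℝ) 1, ∫ ξ in Ioi (0 : ℝ), (w - 1) * cexp (-((1 + t * (w - 1)) * ξ)) :=
      integral_integral_swap (integrable_cexp_neg_segment_mul hw)
  _ = ∫ t in Ioc (0 : ℝ) 1, (w - 1) / (1 + t * (w - 1)) := by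
      refine setIntegral_congr_fun measurableSet_Ioc fun t ht => ?_
      have hre :=
        (lt_min one_pos hw).trans_le (min_one_re_le_re_segment (Ioc_subset_Icc_self ht))
      rw [integral_const_mul, integral_Ioi_cexp_neg_mul hre, div_eq_mul_inv]
  _ = log w := integral_sub_one_div_segment hw

end ComplexFrullani

theorem integral_eq_integral_Ioi_add_integral_Ioi_comp_neg {E : Type*} [NormedAddCommGroup E]
    [NormedSpace ℝ E] {f : ℝ → E} (hpos : IntegrableOn f (Ioi 0))
    (hneg : IntegrableOn (fun x => f (-x)) (Ioi 0)) :
    ∫ x, f x = (∫ x in Ioi 0, f x) + ∫ x in Ioi 0, f (-x) := by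
  have hIic : IntegrableOn f (Iic 0) := by
    rw [integrableOn_Iic_iff_integrableOn_Iio]
    simpa using hneg.comp_neg
  rw [← intervalIntegral.integral_Iic_add_Ioi hIic hpos, add_comm, integral_comp_neg_Ioi, neg_zero]

theorem log_ofReal_mul_cexp_I_mul {r θ : ℝ} (hr : 0 < r) (hθ : θ ∈ Ioc (-Real.pi) Real.pi) :
    log (r * cexp (I * θ)) = Real.log r + I * θ := by
  rw [log_ofReal_mul hr (exp_ne_zero _), log_exp]
  · simpa using hθ.1
  · simpa using hθ.2

theorem div_neg_I_mul (z x : ℂ) : z / (-I * x) = I * z / x := by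
  rw [div_mul_eq_div_div, div_neg, div_I]
  ring

theorem re_ofReal_mul_cexp_I_mul_pos {r θ : ℝ} (hr : 0 < r)
    (hθ : θ ∈ Ioo (-(Real.pi / 2)) (Real.pi / 2)) : 0 < (r * cexp (I * θ)).re := by
  simpa [mul_comm I, exp_ofReal_mul_I_re] using mul_pos hr (Real.cos_pos_of_mem_Ioo hθ)

/-- The integrand of `J(c₀ e^{iω₀})`, without the factor `1 / (2π)`. -/
noncomputable def jIntegrand (c₀ ω₀ ξ : ℝ) : ℂ :=
  (cexp (-((c₀ : ℂ) * (|ξ| : ℝ) * cexp (I * (ω₀ : ℂ) * (Real.sign ξ : ℝ)))) - cexp (-(|ξ| : ℝ))) /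
    (-I * (ξ : ℂ))

theorem jIntegrand_neg (c₀ ω₀ ξ : ℝ) : jIntegrand c₀ ω₀ (-ξ) = -jIntegrand c₀ (-ω₀) ξ := by
  simp only [jIntegrand, abs_neg, Real.sign_neg, div_neg_I_mul]
  push_cast
  ring_nf

theorem jIntegrand_of_pos (c₀ ω₀ : ℝ) {ξ : ℝ} (hξ : 0 < ξ) :
    jIntegrand c₀ ω₀ ξ = -I * ((cexp (-ξ) - cexp (-(c₀ * cexp (I * ω₀) * ξ))) / ξ) := by
  simp only [jIntegrand, Real.sign_of_pos hξ, abs_of_pos hξ, div_neg_I_mul]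
  push_cast
  ring_nf

theorem integrableOn_Ioi_jIntegrand {c₀ ω₀ : ℝ} (hc₀ : 0 < c₀)
    (hω₀ : ω₀ ∈ Ioo (-(Real.pi / 2)) (Real.pi / 2)) : IntegrableOn (jIntegrand c₀ ω₀) (Ioi 0) :=
  IntegrableOn.congr_fun
    ((integrableOn_cexp_neg_sub_cexp_neg_mul_div
      (re_ofReal_mul_cexp_I_mul_pos hc₀ hω₀)).const_mul _)
    (fun _ hξ => (jIntegrand_of_pos c₀ ω₀ hξ).symm) measurableSet_Ioi

theorem integral_Ioi_jIntegrand {c₀ ω₀ : ℝ} (hc₀ : 0 < c₀)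
    (hω₀ : ω₀ ∈ Ioo (-(Real.pi / 2)) (Real.pi / 2)) :
    ∫ ξ in Ioi 0, jIntegrand c₀ ω₀ ξ = ω₀ - I * Real.log c₀ := by
  have hθ : ω₀ ∈ Ioc (-Real.pi) Real.pi :=
    ⟨by linarith [hω₀.1, Real.pi_pos], by linarith [hω₀.2, Real.pi_pos]⟩
  rw [setIntegral_congr_fun measurableSet_Ioi fun _ hξ => jIntegrand_of_pos c₀ ω₀ hξ,
    integral_const_mul,
    integral_Ioi_cexp_neg_sub_cexp_neg_mul_div (re_ofReal_mul_cexp_I_mul_pos hc₀ hω₀),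
    log_ofReal_mul_cexp_I_mul hc₀ hθ]
  ring_nf
  simp [I_sq]

/-- For c₀ > 0 and ω₀ ∈ (−π/2, π/2),
J(c₀e^{iω₀}) = (1/(2π)) ∫ℝ (e^{−c₀|ξ|e^{iω₀ sign ξ}} − e^{−|ξ|})/(−iξ) dξ = ω₀/π. -/
theorem stmt_13 (c₀ ω₀ : ℝ) (hc₀ : 0 < c₀)
    (hω₀ : ω₀ ∈ Set.Ioo (-(Real.pi / 2)) (Real.pi / 2)) :
    (1 / (2 * Real.pi) : ℂ) *
      (∫ ξ : ℝ,
        (Complex.exp (-((c₀ : ℂ) * (|ξ| : ℝ) *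
            Complex.exp (Complex.I * (ω₀ : ℂ) * (Real.sign ξ : ℝ)))) -
          Complex.exp (-(|ξ| : ℝ))) / (-Complex.I * (ξ : ℂ))) =
    ((ω₀ / Real.pi : ℝ) : ℂ) := by
  have hω₀' : -ω₀ ∈ Ioo (-(Real.pi / 2)) (Real.pi / 2) :=
    ⟨by linarith [hω₀.2], by linarith [hω₀.1]⟩
  have hneg : IntegrableOn (fun ξ => jIntegrand c₀ ω₀ (-ξ)) (Ioi 0) := by
    simp_rw [jIntegrand_neg]
    exact (integrableOn_Ioi_jIntegrand hc₀ hω₀').neg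
  change (1 / (2 * Real.pi) : ℂ) * ∫ ξ, jIntegrand c₀ ω₀ ξ = _
  rw [integral_eq_integral_Ioi_add_integral_Ioi_comp_neg
    (integrableOn_Ioi_jIntegrand hc₀ hω₀) hneg]
  simp only [jIntegrand_neg, integral_neg, integral_Ioi_jIntegrand hc₀ hω₀,
    integral_Ioi_jIntegrand hc₀ hω₀']
  have hπ : (Real.pi : ℂ) ≠ 0 := ofReal_ne_zero.2 Real.pi_ne_zero
  push_cast
  field_simp
  ring
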